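/- Let H1, H2 ∈ (0,1) and t, t', s, s' ≥ 0. Set A = t^{2H1} + t'^{2H1} − |t − t'|^{2H1} and B = s^{2H2} + s'^{2H2} − |s − s'|^{2H2}. Then (t^{2H1} + s^{2H2})·(t'^{2H1} + s'^{2H2}) − (1/4)(A + B)² ≥ φ_{H1}(t, t') + φ_{H2}(s, s'). -/

import Mathlib

/-!
`phi H u v` is the Gram determinant of the fractional Brownian motion `(B_u, B_v)`, and the
right-hand side of the theorem is the determinant of the sum of two such 2×2 covariance
matrices. The determinant of a sum of positive semidefinite 2×2 matrices dominates the sum of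
their determinants, so it suffices that `phi` is nonnegative. With `a = u^H`, `b = v^H` and
`w = |u - v|^H`, `4 phi` factors as `(w² - (a - b)²) ((a + b)² - w²)`, and for `H ≤ 1` the
bounds `|a - b| ≤ w ≤ a + b` make both factors nonnegative.
-/

/-- `φ_H(u,v) := u^{2H} v^{2H} - (1/4)(u^{2H} + v^{2H} - |u-v|^{2H})²`. -/
noncomputable def phi (H u v : ℝ) : ℝ :=
  u ^ (2 * H) * v ^ (2 * H) - 1/4 * (u ^ (2 * H) + v ^ (2 * H) - |u - v| ^ (2 * H)) ^ 2

namespace Real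

variable {p u v : ℝ}

lemma rpow_two_mul (hu : 0 ≤ u) (p : ℝ) : u ^ (2 * p) = (u ^ p) ^ 2 := by
  rw [mul_comm]
  exact_mod_cast rpow_mul_natCast hu p 2

lemma abs_rpow_sub_rpow_le_abs_sub_rpow (hu : 0 ≤ u) (hv : 0 ≤ v) (hp : 0 ≤ p) (hp1 : p ≤ 1) :
    |u ^ p - v ^ p| ≤ |u - v| ^ p := by
  wlog hvu : v ≤ u generalizing u v
  · simpa only [abs_sub_comm] using this hv hu (le_of_not_ge hvu)
  have hsub : 0 ≤ u - v := sub_nonneg.2 hvu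
  have hsubadd : u ^ p ≤ (u - v) ^ p + v ^ p := by
    simpa only [sub_add_cancel] using rpow_add_le_add_rpow hsub hv hp hp1
  rw [abs_of_nonneg hsub, abs_of_nonneg (sub_nonneg.2 (rpow_le_rpow hv hvu hp))]
  linarith

lemma abs_sub_rpow_le_rpow_add_rpow (hu : 0 ≤ u) (hv : 0 ≤ v) (hp : 0 ≤ p) :
    |u - v| ^ p ≤ u ^ p + v ^ p := by
  wlog hvu : v ≤ u generalizing u v
  · simpa only [abs_sub_comm, add_comm] using this hv hu (le_of_not_ge hvu)
  rw [abs_of_nonneg (sub_nonneg.2 hvu)]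
  linarith [rpow_le_rpow (sub_nonneg.2 hvu) (sub_le_self u hv) hp, rpow_nonneg hv p]

end Real

open Real in
lemma phi_nonneg {H u v : ℝ} (hH : 0 ≤ H) (hH1 : H ≤ 1) (hu : 0 ≤ u) (hv : 0 ≤ v) :
    0 ≤ phi H u v := by
  set a := u ^ H
  set b := v ^ H
  set w := |u - v| ^ H
  have hw : 0 ≤ w := rpow_nonneg (abs_nonneg _) H
  have hlower : (a - b) ^ 2 ≤ w ^ 2 :=
    sq_le_sq.2 ((abs_rpow_sub_rpow_le_abs_sub_rpow hu hv hH hH1).trans (le_abs_self w))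
  have hupper : w ^ 2 ≤ (a + b) ^ 2 :=
    pow_le_pow_left₀ hw (abs_sub_rpow_le_rpow_add_rpow hu hv hH) 2
  rw [phi, rpow_two_mul hu, rpow_two_mul hv, rpow_two_mul (abs_nonneg _)]
  linear_combination (1 / 4 : ℝ) * mul_nonneg (sub_nonneg.2 hlower) (sub_nonneg.2 hupper)

lemma det_two_add_ge {x x' y y' c d : ℝ} (hx : 0 ≤ x) (hx' : 0 ≤ x') (hy : 0 ≤ y) (hy' : 0 ≤ y')
    (hc : c ^ 2 ≤ x * x') (hd : d ^ 2 ≤ y * y') :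
    x * x' - c ^ 2 + (y * y' - d ^ 2) ≤ (x + y) * (x' + y') - (c + d) ^ 2 := by
  have hcross : (2 * c * d) ^ 2 ≤ (x * y' + x' * y) ^ 2 := by
    nlinarith [mul_le_mul hc hd (sq_nonneg d) (by positivity), sq_nonneg (x * y' - x' * y)]
  nlinarith [abs_le_of_sq_le_sq' hcross (by positivity)]

theorem covariance_lower_bound (H1 H2 : ℝ) (h1 : H1 ∈ Set.Ioo (0:ℝ) 1)
    (h2 : H2 ∈ Set.Ioo (0:ℝ) 1)
    (t t' s s' : ℝ) (ht : 0 ≤ t) (ht' : 0 ≤ t') (hs : 0 ≤ s) (hs' : 0 ≤ s') :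
    phi H1 t t' + phi H2 s s' ≤
      (t ^ (2 * H1) + s ^ (2 * H2)) * (t' ^ (2 * H1) + s' ^ (2 * H2)) -
        1/4 * ((t ^ (2 * H1) + t' ^ (2 * H1) - |t - t'| ^ (2 * H1)) +
                (s ^ (2 * H2) + s' ^ (2 * H2) - |s - s'| ^ (2 * H2))) ^ 2 := by
  have hphi1 := phi_nonneg h1.1.le h1.2.le ht ht'
  have hphi2 := phi_nonneg h2.1.le h2.2.le hs hs'
  unfold phi at hphi1 hphi2 ⊢
  have hdet := det_two_add_ge (Real.rpow_nonneg ht (2 * H1)) (Real.rpow_nonneg ht' (2 * H1))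
    (Real.rpow_nonneg hs (2 * H2)) (Real.rpow_nonneg hs' (2 * H2))
    (c := (t ^ (2 * H1) + t' ^ (2 * H1) - |t - t'| ^ (2 * H1)) / 2)
    (d := (s ^ (2 * H2) + s' ^ (2 * H2) - |s - s'| ^ (2 * H2)) / 2) (by linarith) (by linarith)
  linarith
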